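/- Let G be a cubic totally silver graph with a totally silver coloring c, and let (S,T) be a partition of V(G) such that exactly two edges xy and x'y' cross between S and T, with x,x' ∈ S, x ≠ x', y ≠ y'. Then c(x') = c(y) and c(y') = c(x). -/

import Mathlib

/-- A totally silver coloring: each of the `k` colors appears exactly once on every
closed neighborhood `N[v]`. -/
def IsTotallySilver {V : Type*} {k : ℕ} (G : SimpleGraph V) (c : V → Fin k) : Prop :=
  ∀ v : V, ∀ i : Fin k, ∃! w : V, (w = v ∨ G.Adj v w) ∧ c w = i

/-!
Every color class of a totally silver coloring is a perfect code, so counting the vertices of `S`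
through the closed neighbourhoods of the vertices of color `i` of a cubic graph gives
`|S| = 4 |S ∩ c⁻¹(i)| - [c x = i] - [c x' = i] + [c y = i] + [c y' = i]`.
Hence `i ↦ [c y = i] + [c y' = i] - [c x = i] - [c x' = i]` is constant modulo 4. It takes values
in `[-2, 2]`, and a finite check shows that, as `c x ≠ c y` and `c x' ≠ c y'`, this forces
`c x' = c y` and `c y' = c x`.
-/

open Finset

theorem Fin.eq_and_eq_of_forall_add_ite_eq (a b d e : Fin 4) (s : ZMod 4)
    (h : ∀ i, s + ((if a = i then 1 else 0) + (if b = i then 1 else 0)) =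
      (if d = i then 1 else 0) + (if e = i then 1 else 0))
    (had : a ≠ d) (hbe : b ≠ e) : b = d ∧ e = a := by
  revert a b d e s
  decide

namespace SimpleGraph

variable {V : Type*} [Fintype V] [DecidableEq V] (G : SimpleGraph V) [DecidableRel G.Adj]

def cutDarts (s : Finset V) : Finset (V × V) :=
  {p ∈ s ×ˢ sᶜ | G.Adj p.1 p.2}

variable {G}

theorem card_closedNbhd_inter_add_card_cutDarts {d : ℕ} (hreg : G.IsRegularOfDegree d)
    (s : Finset V) (w : V) :
    #{v ∈ s | w = v ∨ G.Adj v w} + #{p ∈ G.cutDarts s | p.1 = w} =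
      (if w ∈ s then d + 1 else 0) + #{p ∈ G.cutDarts s | p.2 = w} := by
  by_cases hw : w ∈ s
  · have hclosed :
        {v ∈ s | w = v ∨ G.Adj v w} = insert w {v ∈ G.neighborFinset w | v ∈ s} := by
      ext v
      simp only [mem_filter, mem_insert, mem_neighborFinset]
      grind [G.adj_symm, G.loopless]
    have hleaving : {p ∈ G.cutDarts s | p.1 = w} =
        {v ∈ G.neighborFinset w | v ∉ s}.image (Prod.mk w) := by
      ext ⟨a, b⟩
      grind [cutDarts, mem_compl, mem_neighborFinset]
    have hentering : {p ∈ G.cutDarts s | p.2 = w} = ∅ := by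
      ext ⟨a, b⟩
      grind [cutDarts, mem_compl]
    rw [hclosed, hleaving, hentering, card_insert_of_notMem (by simp), card_image_of_injective _
      (Prod.mk_right_injective w), add_right_comm, card_filter_add_card_filter_not,
      card_neighborFinset_eq_degree, hreg w, if_pos hw, card_empty]
  · have hentering :
        {p ∈ G.cutDarts s | p.2 = w} = {v ∈ s | w = v ∨ G.Adj v w}.image (·, w) := by
      ext ⟨a, b⟩
      grind [cutDarts, mem_compl, G.adj_symm]
    have hleaving : {p ∈ G.cutDarts s | p.1 = w} = ∅ := by
      ext ⟨a, b⟩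
      grind [cutDarts, mem_compl]
    rw [hentering, hleaving, card_image_of_injective _ (Prod.mk_left_injective w), if_neg hw,
      card_empty, add_zero, zero_add]

end SimpleGraph

theorem IsTotallySilver.ne_of_adj {V : Type*} {G : SimpleGraph V} {k : ℕ} {c : V → Fin k}
    (hc : IsTotallySilver G c) {u v : V} (h : G.Adj u v) : c u ≠ c v := by
  intro huv
  obtain ⟨w, -, hw⟩ := hc u (c v)
  exact G.ne_of_adj h ((hw u ⟨Or.inl rfl, huv⟩).trans (hw v ⟨Or.inr h, rfl⟩).symm)

namespace IsTotallySilver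

variable {V : Type*} [Fintype V] [DecidableEq V] {G : SimpleGraph V} [DecidableRel G.Adj]
  {k : ℕ} {c : V → Fin k}

theorem sum_card_closedNbhd_inter (hc : IsTotallySilver G c) (s : Finset V) (i : Fin k) :
    ∑ w with c w = i, #{v ∈ s | w = v ∨ G.Adj v w} = #s := by
  calc ∑ w with c w = i, #{v ∈ s | w = v ∨ G.Adj v w}
      = ∑ v ∈ s, #{w ∈ {w | c w = i} | w = v ∨ G.Adj v w} :=
        (sum_card_bipartiteAbove_eq_sum_card_bipartiteBelow _).symm
    _ = ∑ v ∈ s, 1 := sum_congr rfl fun v _ => by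
        rw [filter_filter, ← Fintype.existsUnique_iff_card_one]
        simpa only [and_comm] using hc v i
    _ = #s := (card_eq_sum_ones s).symm

theorem card_add_card_cutDarts_fst {d : ℕ} (hc : IsTotallySilver G c)
    (hreg : G.IsRegularOfDegree d) (s : Finset V) (i : Fin k) :
    #s + #{p ∈ G.cutDarts s | c p.1 = i} =
      (d + 1) * #{w ∈ s | c w = i} + #{p ∈ G.cutDarts s | c p.2 = i} := by
  have fiberwise (f : V × V → V) :
      #{p ∈ G.cutDarts s | c (f p) = i} =
        ∑ w with c w = i, #{p ∈ G.cutDarts s | f p = w} := by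
    rw [card_eq_sum_card_fiberwise (f := f) (t := {w | c w = i})
      fun p hp => (mem_filter_univ _).2 (mem_filter.1 hp).2]
    refine sum_congr rfl fun w hw => ?_
    rw [filter_filter]
    congr 1
    grind
  have h := sum_congr rfl fun w (_ : w ∈ ({w | c w = i} : Finset V)) =>
    SimpleGraph.card_closedNbhd_inter_add_card_cutDarts hreg s w
  rwa [sum_add_distrib, sum_add_distrib, hc.sum_card_closedNbhd_inter, ← fiberwise, ← fiberwise,
    sum_ite_mem, sum_const, smul_eq_mul, mul_comm, filter_inter, univ_inter] at h

end IsTotallySilver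

theorem stmt_11_general {V : Type*} [Fintype V] (G : SimpleGraph V) [DecidableRel G.Adj]
    (hreg : G.IsRegularOfDegree 3)
    (c : V → Fin 4) (hc : IsTotallySilver G c)
    (S : Set V) (x x' y y' : V)
    (hxS : x ∈ S) (hx'S : x' ∈ S) (hyT : y ∉ S) (hy'T : y' ∉ S)
    (hxx' : x ≠ x')
    (hxy : G.Adj x y) (hx'y' : G.Adj x' y')
    (hcut : ∀ a b, G.Adj a b → a ∈ S → b ∉ S → (a = x ∧ b = y) ∨ (a = x' ∧ b = y')) :
    c x' = c y ∧ c y' = c x := by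
  classical
  set s : Finset V := {v | v ∈ S}
  have hcutDarts : G.cutDarts s = {(x, y), (x', y')} := by
    ext ⟨a, b⟩
    simp only [SimpleGraph.cutDarts, s, mem_filter, mem_product, mem_compl, mem_univ, true_and,
      mem_insert, mem_singleton, Prod.mk.injEq]
    grind
  have hpair : (x, y) ≠ (x', y') := fun h => hxx' (Prod.mk.inj h).1
  refine Fin.eq_and_eq_of_forall_add_ite_eq _ _ _ _ (#s) (fun i => ?_)
    (hc.ne_of_adj hxy) (hc.ne_of_adj hx'y')
  have h := congrArg (Nat.cast : ℕ → ZMod 4) (hc.card_add_card_cutDarts_fst hreg s i)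
  rw [hcutDarts, card_filter (fun p : V × V => c p.1 = i),
    card_filter (fun p : V × V => c p.2 = i), sum_pair hpair, sum_pair hpair] at h
  push_cast at h
  simpa [show (4 : ZMod 4) = 0 from rfl] using h

theorem stmt_11 {V : Type*} [Fintype V] (G : SimpleGraph V) [DecidableRel G.Adj]
    (hreg : G.IsRegularOfDegree 3)
    (c : V → Fin 4) (hc : IsTotallySilver G c)
    (S : Set V) (x x' y y' : V)
    (hxS : x ∈ S) (hx'S : x' ∈ S) (hyT : y ∉ S) (hy'T : y' ∉ S)
    (hxx' : x ≠ x') (hyy' : y ≠ y')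
    (hxy : G.Adj x y) (hx'y' : G.Adj x' y')
    (hcut : ∀ a b, G.Adj a b → a ∈ S → b ∉ S → (a = x ∧ b = y) ∨ (a = x' ∧ b = y')) :
    c x' = c y ∧ c y' = c x :=
  stmt_11_general G hreg c hc S x x' y y' hxS hx'S hyT hy'T hxx' hxy hx'y' hcut
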